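/- arXiv:0711.3774 — 3 statements merged into one kernel-verified Lean document; each statement's English description precedes it below -/
import Mathlib

section
/- Every representation of the Heisenberg group H_n over an algebraically closed field of characteristic 0 with central character [r], r coprime to n, is a direct sum of irreducible n-dimensional representations, and up to equivalence there is a unique irreducible n-dimensional representation of H_n with central character [r]. -/
/-- A submodule invariant under a representation. -/
def RepInvariant {G V : Type*} [Group G] [AddCommGroup V] [Module ℂ V]
    (ρ : Representation ℂ G V) (p : Submodule ℂ V) : Prop :=
  ∀ g : G, ∀ v ∈ p, ρ g v ∈ p

/-- A representation is irreducible on an invariant submodule `p` if `p` is nonzero and the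
only invariant submodules contained in `p` are `⊥` and `p`. -/
def IrreducibleOn {G V : Type*} [Group G] [AddCommGroup V] [Module ℂ V]
    (ρ : Representation ℂ G V) (p : Submodule ℂ V) : Prop :=
  p ≠ ⊥ ∧ ∀ q : Submodule ℂ V, q ≤ p → RepInvariant ρ q → q = ⊥ ∨ q = p

/-- A representation has central character `[r]` (with respect to an identification `ζ` of the
centre with `n`-th roots of unity) if every central element acts as `ζ^r • id`. -/
def HasCentralChar {G V : Type*} [Group G] [AddCommGroup V] [Module ℂ V]
    (ζ : Subgroup.center G →* ℂˣ) (r : ℕ) (ρ : Representation ℂ G V) : Prop :=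
  ∀ z : Subgroup.center G, ρ (z : G) = ((ζ z : ℂ) ^ r) • (LinearMap.id : V →ₗ[ℂ] V)

open scoped commutatorElement

/-! For a representation with central character `[r]`, the centre acts through the faithful
character `z ↦ ζ(z)^r`. Commutators being central, conjugating a non-central `g` by an element
it does not commute with multiplies `ρ g` by a scalar `≠ 1`, so characters vanish off the
centre. Only the `n` central elements then contribute to the character inner product, which
gives `dim Hom_G(V₁, V₂) · n² = dim V₁ · dim V₂`. By Schur's lemma an irreducible `V` has
`dim V = n`, and by Maschke's theorem every representation is a direct sum of irreducibles, so
`n` divides every dimension. Between two `n`-dimensional representations `dim Hom_G = 1`, and the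
kernel of a nonzero intertwiner has dimension divisible by `n` and less than `n`, hence is zero. -/

universe u

open Module Representation
open scoped MonoidAlgebra

theorem Representation.character_eq_zero_of_commutator_eq_smul {k G V : Type*} [Field k]
    [Group G] [AddCommGroup V] [Module k V] (ρ : Representation k G V) {x g : G} {c : k}
    (hxg : ρ ⁅x, g⁆ = c • LinearMap.id) (hc : c ≠ 1) : ρ.character g = 0 := by
  have hconj : ρ.character (x * g * x⁻¹) = c * ρ.character g := by
    rw [show x * g * x⁻¹ = ⁅x, g⁆ * g by group, character, map_mul, hxg, smul_mul_assoc,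
      ← Module.End.one_eq_id, one_mul, map_smul, smul_eq_mul, character]
  rw [char_conj] at hconj
  have : (c - 1) * ρ.character g = 0 := by linear_combination -hconj
  exact (mul_eq_zero.mp this).resolve_left (sub_ne_zero.mpr hc)

theorem injective_pow_of_coprime {Z M : Type*} [Group Z] [CommMonoid M] {n r : ℕ}
    (hr : r.Coprime n) (ζ : Z →* Mˣ) (hζ : Function.Injective ζ)
    (hζn : ∀ z, (ζ z : M) ^ n = 1) :
    Function.Injective fun z => (ζ z : M) ^ r := by
  intro a b hab
  have hab' : ζ a ^ r = ζ b ^ r := Units.ext (by simpa using hab)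
  have hpow_r : ζ (a⁻¹ * b) ^ r = 1 := by
    rw [map_mul, map_inv, mul_pow, inv_pow, hab', inv_mul_cancel]
  have hpow_n : ζ (a⁻¹ * b) ^ n = 1 :=
    Units.ext (by rw [Units.val_pow_eq_pow_val, hζn, Units.val_one])
  have hone : ζ (a⁻¹ * b) = 1 := by simpa [hr] using pow_gcd_eq_one.mpr ⟨hpow_r, hpow_n⟩
  exact inv_mul_eq_one.mp (hζ (hone.trans (map_one ζ).symm))

section CentralCharacter

variable {G : Type*} [Group G] {ζ : Subgroup.center G →* ℂˣ} {r : ℕ}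

theorem HasCentralChar.character_apply {V : Type*} [AddCommGroup V] [Module ℂ V]
    [FiniteDimensional ℂ V] {ρ : Representation ℂ G V} (hρ : HasCentralChar ζ r ρ)
    (z : Subgroup.center G) :
    ρ.character z = (ζ z : ℂ) ^ r * finrank ℂ V := by
  rw [character, hρ z, map_smul, LinearMap.trace_id, smul_eq_mul]

theorem HasCentralChar.subrepresentation {V : Type*} [AddCommGroup V] [Module ℂ V]
    {ρ : Representation ℂ G V} (hρ : HasCentralChar ζ r ρ) {p : Submodule ℂ V}
    (hp : RepInvariant ρ p) : HasCentralChar ζ r (ρ.subrepresentation p hp) := by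
  intro z
  ext v
  exact LinearMap.congr_fun (hρ z) v

theorem HasCentralChar.character_eq_zero {V : Type*} [AddCommGroup V] [Module ℂ V]
    {ρ : Representation ℂ G V} (hcomm : ∀ x y : G, ⁅x, y⁆ ∈ Subgroup.center G)
    (hζr : Function.Injective fun z => (ζ z : ℂ) ^ r) (hρ : HasCentralChar ζ r ρ) {g : G}
    (hg : g ∉ Subgroup.center G) : ρ.character g = 0 := by
  obtain ⟨x, hx⟩ : ∃ x, ¬Commute x g := by
    simpa [Subgroup.mem_center_iff, Commute, SemiconjBy, eq_comm] using hg
  have hne : (⟨⁅x, g⁆, hcomm x g⟩ : Subgroup.center G) ≠ 1 := fun h =>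
    hx (commutatorElement_eq_one_iff_commute.mp (congrArg Subtype.val h))
  exact ρ.character_eq_zero_of_commutator_eq_smul (hρ ⟨⁅x, g⁆, hcomm x g⟩)
    fun h => hne (hζr (by simpa using h))

theorem HasCentralChar.finrank_intertwiningMap_mul_sq [Fintype G] {n : ℕ}
    (hcard : Fintype.card G = n ^ 3) (hZcard : Nat.card (Subgroup.center G) = n)
    (hcomm : ∀ x y : G, ⁅x, y⁆ ∈ Subgroup.center G)
    (hζr : Function.Injective fun z => (ζ z : ℂ) ^ r)
    {V₁ V₂ : Type*} [AddCommGroup V₁] [Module ℂ V₁] [FiniteDimensional ℂ V₁]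
    [AddCommGroup V₂] [Module ℂ V₂] [FiniteDimensional ℂ V₂]
    {ρ₁ : Representation ℂ G V₁} {ρ₂ : Representation ℂ G V₂}
    (h₁ : HasCentralChar ζ r ρ₁) (h₂ : HasCentralChar ζ r ρ₂) :
    finrank ℂ (IntertwiningMap ρ₁ ρ₂) * n ^ 2 = finrank ℂ V₁ * finrank ℂ V₂ := by
  have hcentral (z : Subgroup.center G) :
      ρ₂.character z * ρ₁.character (z : G)⁻¹ = finrank ℂ V₁ * finrank ℂ V₂ := by
    rw [← Subgroup.coe_inv, h₁.character_apply, h₂.character_apply, map_inv,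
      Units.val_inv_eq_inv_val, inv_pow]
    field_simp
  have hsum :
      ∑ g : G, ρ₂.character g * ρ₁.character g⁻¹ = n * (finrank ℂ V₁ * finrank ℂ V₂) := by
    classical
    rw [← Fintype.sum_subtype_add_sum_subtype (· ∈ Subgroup.center G)]
    have hoff : ∑ g : {g // g ∉ Subgroup.center G}, ρ₂.character g * ρ₁.character g⁻¹ = 0 :=
      Fintype.sum_eq_zero _ fun g => by rw [h₂.character_eq_zero hcomm hζr g.2, zero_mul]
    rw [hoff, add_zero, Fintype.sum_congr _ _ hcentral, Finset.sum_const, Finset.card_univ,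
      nsmul_eq_mul, ← Nat.card_eq_fintype_card, hZcard]
  have hn : (n : ℂ) ≠ 0 :=
    Nat.cast_ne_zero.mpr fun h => Fintype.card_ne_zero (hcard.trans (by simp [h]))
  let _ : Invertible (Nat.card G : ℂ) :=
    invertibleOfNonzero (Nat.cast_ne_zero.mpr Nat.card_pos.ne')
  have horth := card_inv_mul_sum_char_mul_char_eq_finrank ρ₁ ρ₂
  rw [hsum, Nat.card_eq_fintype_card, hcard] at horth
  push_cast at horth
  have : (finrank ℂ (IntertwiningMap ρ₁ ρ₂) : ℂ) * n ^ 2 = finrank ℂ V₁ * finrank ℂ V₂ := by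
    rw [← horth]
    field_simp
  exact_mod_cast this

end CentralCharacter

theorem iSupIndep.restrictScalars {R A M ι : Type*} [Ring R] [Ring A] [AddCommGroup M]
    [Module R M] [Module A M] [SMul R A] [IsScalarTower R A M] {p : ι → Submodule A M}
    (hp : iSupIndep p) : iSupIndep fun i => (p i).restrictScalars R := by
  rw [iSupIndep_iff_finsetSum_eq_zero_imp_eq_zero] at hp ⊢
  exact hp

section Irreducible

variable {G : Type*} {V : Type u} [Group G] [AddCommGroup V] [Module ℂ V]
  {ρ : Representation ℂ G V}

theorem IrreducibleOn.isIrreducible_subrepresentation {p : Submodule ℂ V}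
    (hp : RepInvariant ρ p) (hirr : IrreducibleOn ρ p) :
    (ρ.subrepresentation p hp).IsIrreducible := by
  have hmap (σ : Subrepresentation (ρ.subrepresentation p hp)) :
      σ.toSubmodule.map p.subtype = ⊥ ∨ σ.toSubmodule.map p.subtype = p := by
    refine hirr.2 _ (Submodule.map_subtype_le p _) ?_
    rintro g _ ⟨w, hw, rfl⟩
    exact ⟨_, σ.apply_mem_toSubmodule g hw, rfl⟩
  have hinj := Submodule.map_injective_of_injective p.injective_subtype
  refine { exists_pair_ne := ⟨⊥, ⊤, fun h => hirr.1 ?_⟩, eq_bot_or_eq_top := fun σ => ?_ }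
  · have htop : (⊤ : Submodule ℂ p) = ⊥ := (congrArg Subrepresentation.toSubmodule h).symm
    rw [← Submodule.map_subtype_top p, htop, Submodule.map_bot]
  · rcases hmap σ with h | h
    · exact .inl (Subrepresentation.ext (hinj (h.trans (Submodule.map_bot _).symm)))
    · exact .inr (Subrepresentation.ext (hinj (h.trans (Submodule.map_subtype_top p).symm)))

theorem Representation.exists_isInternal_irreducibleOn [Finite G] [FiniteDimensional ℂ V]
    (ρ : Representation ℂ G V) :
    ∃ (ι : Type u) (_ : Finite ι) (_ : DecidableEq ι) (W : ι → Submodule ℂ V),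
      (∀ i, RepInvariant ρ (W i)) ∧ (∀ i, IrreducibleOn ρ (W i)) ∧ DirectSum.IsInternal W := by
  classical
  have : NeZero (Nat.card G : ℂ) := ⟨Nat.cast_ne_zero.mpr Nat.card_pos.ne'⟩
  -- Maschke's theorem makes `ρ.asModule` a semisimple `ℂ[G]`-module.
  obtain ⟨s, hind, htop, hsimple⟩ :=
    IsSemisimpleModule.exists_sSupIndep_sSup_simples_eq_top ℂ[G] ρ.asModule
  let W : s → Submodule ℂ V := fun m => m.1.restrictScalars ℂ
  have hirr (m : s) : IrreducibleOn ρ (W m) := by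
    have hatom := isSimpleModule_iff_isAtom.mp (hsimple m m.2)
    refine ⟨mt (Submodule.restrictScalars_eq_bot_iff ℂ _ _).mp hatom.1, fun q hq hqinv => ?_⟩
    have hle : (Subrepresentation.mk q hqinv).asSubmodule ≤ m := hq
    rcases hatom.le_iff.mp hle with h | h
    · exact .inl (congrArg (fun N : Submodule ℂ[G] ρ.asModule => N.restrictScalars ℂ) h)
    · exact .inr (congrArg (fun N : Submodule ℂ[G] ρ.asModule => N.restrictScalars ℂ) h)
  have hWind : iSupIndep W := ((sSupIndep_iff s).mp hind).restrictScalars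
  have : Finite s := WellFoundedGT.finite_of_iSupIndep hWind fun m => (hirr m).1
  refine ⟨s, this, inferInstance, W, fun m g v hv => ?_, hirr, ?_⟩
  · exact (Subrepresentation.ofSubmodule' m.1).apply_mem_toSubmodule g hv
  · refine (DirectSum.isInternal_submodule_iff_iSupIndep_and_iSup_eq_top W).mpr ⟨hWind, ?_⟩
    -- `ρ.asModule` is `V`; restating the goal there lets `restrictScalars_iSup` apply.
    change (⨆ m : s, (m.1.restrictScalars ℂ : Submodule ℂ ρ.asModule)) = ⊤
    rw [← Submodule.restrictScalars_iSup, ← sSup_eq_iSup', htop, Submodule.restrictScalars_top]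

end Irreducible

section Heisenberg

variable {G : Type*} [Group G] [Fintype G] {n r : ℕ} {ζ : Subgroup.center G →* ℂˣ}

theorem IrreducibleOn.finrank_eq_of_hasCentralChar (hcard : Fintype.card G = n ^ 3)
    (hZcard : Nat.card (Subgroup.center G) = n) (hcomm : ∀ x y : G, ⁅x, y⁆ ∈ Subgroup.center G)
    (hζr : Function.Injective fun z => (ζ z : ℂ) ^ r) {V : Type*} [AddCommGroup V] [Module ℂ V]
    [FiniteDimensional ℂ V] {ρ : Representation ℂ G V} (hρ : HasCentralChar ζ r ρ)
    {p : Submodule ℂ V} (hp : RepInvariant ρ p) (hirr : IrreducibleOn ρ p) :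
    finrank ℂ p = n := by
  have := hirr.isIrreducible_subrepresentation hp
  have h := (hρ.subrepresentation hp).finrank_intertwiningMap_mul_sq hcard hZcard hcomm hζr
    (hρ.subrepresentation hp)
  rw [IsIrreducible.finrank_intertwiningMap_self, one_mul, ← sq] at h
  exact (Nat.pow_left_injective two_ne_zero h).symm

theorem HasCentralChar.exists_isInternal_irreducibleOn (hcard : Fintype.card G = n ^ 3)
    (hZcard : Nat.card (Subgroup.center G) = n) (hcomm : ∀ x y : G, ⁅x, y⁆ ∈ Subgroup.center G)
    (hζr : Function.Injective fun z => (ζ z : ℂ) ^ r) {V : Type u} [AddCommGroup V] [Module ℂ V]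
    [FiniteDimensional ℂ V] {ρ : Representation ℂ G V} (hρ : HasCentralChar ζ r ρ) :
    ∃ (ι : Type u) (_ : Finite ι) (_ : DecidableEq ι) (W : ι → Submodule ℂ V),
      (∀ i, RepInvariant ρ (W i)) ∧ (∀ i, IrreducibleOn ρ (W i)) ∧
      (∀ i, finrank ℂ (W i) = n) ∧ DirectSum.IsInternal W := by
  obtain ⟨ι, hι, hdec, W, hinv, hirr, hint⟩ := ρ.exists_isInternal_irreducibleOn
  exact ⟨ι, hι, hdec, W, hinv, hirr,
    fun i => (hirr i).finrank_eq_of_hasCentralChar hcard hZcard hcomm hζr hρ (hinv i), hint⟩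

theorem HasCentralChar.dvd_finrank (hcard : Fintype.card G = n ^ 3)
    (hZcard : Nat.card (Subgroup.center G) = n) (hcomm : ∀ x y : G, ⁅x, y⁆ ∈ Subgroup.center G)
    (hζr : Function.Injective fun z => (ζ z : ℂ) ^ r) {V : Type*} [AddCommGroup V] [Module ℂ V]
    [FiniteDimensional ℂ V] {ρ : Representation ℂ G V} (hρ : HasCentralChar ζ r ρ) :
    n ∣ finrank ℂ V := by
  obtain ⟨ι, _, _, W, -, -, hdim, hint⟩ :=
    hρ.exists_isInternal_irreducibleOn hcard hZcard hcomm hζr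
  have := Fintype.ofFinite ι
  rw [← (LinearEquiv.ofBijective (DirectSum.coeLinearMap W) hint).finrank_eq, finrank_directSum]
  exact Finset.dvd_sum fun i _ => (hdim i).symm ▸ dvd_rfl

theorem HasCentralChar.nonempty_equiv_of_finrank_eq (hcard : Fintype.card G = n ^ 3)
    (hZcard : Nat.card (Subgroup.center G) = n) (hcomm : ∀ x y : G, ⁅x, y⁆ ∈ Subgroup.center G)
    (hζr : Function.Injective fun z => (ζ z : ℂ) ^ r) (hn : 0 < n) {V₁ V₂ : Type*}
    [AddCommGroup V₁] [Module ℂ V₁] [AddCommGroup V₂] [Module ℂ V₂]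
    {ρ₁ : Representation ℂ G V₁} {ρ₂ : Representation ℂ G V₂}
    (h₁ : HasCentralChar ζ r ρ₁) (h₂ : HasCentralChar ζ r ρ₂) (hd₁ : finrank ℂ V₁ = n)
    (hd₂ : finrank ℂ V₂ = n) : Nonempty (ρ₁.Equiv ρ₂) := by
  have : FiniteDimensional ℂ V₁ := .of_finrank_pos (hd₁ ▸ hn)
  have : FiniteDimensional ℂ V₂ := .of_finrank_pos (hd₂ ▸ hn)
  have hone : finrank ℂ (IntertwiningMap ρ₁ ρ₂) = 1 := by
    have h := h₁.finrank_intertwiningMap_mul_sq hcard hZcard hcomm hζr h₂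
    rw [hd₁, hd₂, ← sq] at h
    exact (Nat.mul_eq_right (pow_pos hn 2).ne').mp h
  have : Nontrivial (IntertwiningMap ρ₁ ρ₂) := Module.finrank_pos_iff.mp (hone ▸ one_pos)
  obtain ⟨f, hf⟩ := exists_ne (0 : IntertwiningMap ρ₁ ρ₂)
  have hker : f.ker.toSubmodule = ⊥ := by
    have hdvd := (h₁.subrepresentation fun g _ hv => f.ker.apply_mem_toSubmodule g hv).dvd_finrank
      hcard hZcard hcomm hζr
    have hlt : finrank ℂ f.ker.toSubmodule < n := hd₁ ▸ Submodule.finrank_lt fun h =>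
      hf (IntertwiningMap.ext (LinearMap.ker_eq_top.mp h))
    exact Submodule.finrank_eq_zero.mp (Nat.eq_zero_of_dvd_of_lt hdvd hlt)
  have hinj : Function.Injective f := LinearMap.ker_eq_bot.mp hker
  exact ⟨f.ofBijective ⟨hinj, (LinearMap.injective_iff_surjective_of_finrank_eq_finrank
    (hd₁.trans hd₂.symm)).mp hinj⟩⟩

end Heisenberg

theorem heisenberg_central_char_reps_general {G : Type*} [Group G] [Fintype G]
    (n r : ℕ) (hn : 0 < n) (hcard : Fintype.card G = n ^ 3)
    (hZcard : Nat.card (Subgroup.center G) = n)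
    (hcomm : ∀ x y : G, ⁅x, y⁆ ∈ Subgroup.center G)
    (hr : Nat.Coprime r n)
    (ζ : Subgroup.center G →* ℂˣ) (hζinj : Function.Injective ζ)
    (hζord : ∀ z : Subgroup.center G, (ζ z : ℂ) ^ n = 1) :
    (∀ (V : Type) [AddCommGroup V] [Module ℂ V] [FiniteDimensional ℂ V]
        (ρ : Representation ℂ G V), HasCentralChar ζ r ρ →
      ∃ (ι : Type) (_ : Finite ι) (_ : DecidableEq ι) (W : ι → Submodule ℂ V),
        (∀ i, RepInvariant ρ (W i)) ∧ (∀ i, IrreducibleOn ρ (W i)) ∧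
        (∀ i, Module.finrank ℂ (W i) = n) ∧ DirectSum.IsInternal W) ∧
    (∀ (V₁ V₂ : Type) [AddCommGroup V₁] [Module ℂ V₁] [AddCommGroup V₂] [Module ℂ V₂]
        (ρ₁ : Representation ℂ G V₁) (ρ₂ : Representation ℂ G V₂),
      HasCentralChar ζ r ρ₁ → HasCentralChar ζ r ρ₂ →
      Module.finrank ℂ V₁ = n → Module.finrank ℂ V₂ = n →
      ∃ e : V₁ ≃ₗ[ℂ] V₂, ∀ (g : G) (v : V₁), e (ρ₁ g v) = ρ₂ g (e v)) := by
  have hζr := injective_pow_of_coprime hr ζ hζinj hζord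
  refine ⟨fun V _ _ _ ρ hρ => hρ.exists_isInternal_irreducibleOn hcard hZcard hcomm hζr, ?_⟩
  intro V₁ V₂ _ _ _ _ ρ₁ ρ₂ h₁ h₂ hd₁ hd₂
  obtain ⟨e⟩ := h₁.nonempty_equiv_of_finrank_eq hcard hZcard hcomm hζr hn h₂ hd₁ hd₂
  exact ⟨e.toLinearEquiv, e.toIntertwiningMap.isIntertwining⟩

/-- **Representations of the Heisenberg group with central character `[r]`.**
Let `G` be a finite Heisenberg-type group of order `n³` with centre cyclic of order `n`,
abelian quotient killed by `n`, and `r` coprime to `n`. Then: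
(i) every finite-dimensional representation of `G` over `ℂ` with central character `[r]` is an
internal direct sum of irreducible `n`-dimensional subrepresentations; and
(ii) any two `n`-dimensional representations with central character `[r]` are equivalent. -/
theorem heisenberg_central_char_reps {G : Type*} [Group G] [Fintype G]
    (n r : ℕ) (hn : 0 < n) (hcard : Fintype.card G = n ^ 3)
    (hZcard : Nat.card (Subgroup.center G) = n)
    (hZcyc : IsCyclic (Subgroup.center G))
    (hcomm : ∀ x y : G, ⁅x, y⁆ ∈ Subgroup.center G)
    (hquot : ∀ g : G, g ^ n ∈ Subgroup.center G)
    (hr : Nat.Coprime r n)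
    (ζ : Subgroup.center G →* ℂˣ) (hζinj : Function.Injective ζ)
    (hζord : ∀ z : Subgroup.center G, (ζ z : ℂ) ^ n = 1) :
    (∀ (V : Type) [AddCommGroup V] [Module ℂ V] [FiniteDimensional ℂ V]
        (ρ : Representation ℂ G V), HasCentralChar ζ r ρ →
      ∃ (ι : Type) (_ : Finite ι) (_ : DecidableEq ι) (W : ι → Submodule ℂ V),
        (∀ i, RepInvariant ρ (W i)) ∧ (∀ i, IrreducibleOn ρ (W i)) ∧
        (∀ i, Module.finrank ℂ (W i) = n) ∧ DirectSum.IsInternal W) ∧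
    (∀ (V₁ V₂ : Type) [AddCommGroup V₁] [Module ℂ V₁] [AddCommGroup V₂] [Module ℂ V₂]
        (ρ₁ : Representation ℂ G V₁) (ρ₂ : Representation ℂ G V₂),
      HasCentralChar ζ r ρ₁ → HasCentralChar ζ r ρ₂ →
      Module.finrank ℂ V₁ = n → Module.finrank ℂ V₂ = n →
      ∃ e : V₁ ≃ₗ[ℂ] V₂, ∀ (g : G) (v : V₁), e (ρ₁ g v) = ρ₂ g (e v)) :=
  heisenberg_central_char_reps_general n r hn hcard hZcard hcomm hr ζ hζinj hζord
end

section
/- Let m and n be coprime positive integers, and consider the theta groups Θ_m, Θ_n, Θ_{mn} of an elliptic curve E (pairs (f,T) as above with group law (f,S)*(g,T) = ((τ_T^* f)g, S+T)). Then the commutator of (f^n, S) and (g^m, T) in Θ_{mn} is trivial for all (f,S) ∈ Θ_m and (g,T) ∈ Θ_n; consequently ((f,S),(g,T)) ↦ (f^n, S)*(g^m, T) defines a group homomorphism Θ_m × Θ_n → Θ_{mn}. -/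
/-!
An axiomatisation of the function field of an elliptic curve `E` over an algebraically
closed field `k` of characteristic zero.  `E` is the group of points, `Fn` the function
field `k̄(E)`, `ι` the inclusion of constants, `div` the divisor map on nonzero functions,
and `t P` the pullback by translation-by-`P`.
-/

variable {k E Fn : Type*} [Field k] [IsAlgClosed k] [CharZero k]
  [AddCommGroup E] [DecidableEq E] [Field Fn]

/-- Membership in the theta group `Θₙ`: pairs `(f, T)` with `T ∈ E[n]` and
`div(f) = τ_T^*(n·O) - n·O = n·(-T) - n·(O)`. -/
def ThetaMem (div : Fnˣ → (E →₀ ℤ)) (n : ℕ) (p : Fnˣ × E) : Prop :=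
  n • p.2 = 0 ∧ ∀ P : E, div p.1 P =
    (if P = -p.2 then (n : ℤ) else 0) - (if P = 0 then (n : ℤ) else 0)

def thetaMul (t : E → Fn ≃+* Fn) (p q : Fnˣ × E) : Fnˣ × E :=
  (Units.map (t q.2 : Fn →* Fn) p.1 * q.1, p.2 + q.2)

def thetaCombine (t : E → Fn ≃+* Fn) (m n : ℕ) (p q : Fnˣ × E) : Fnˣ × E :=
  thetaMul t (p.1 ^ n, p.2) (q.1 ^ m, q.2)

/-! Let `x = (F, S)` and `y = (G, T)` be pairs whose divisors have the theta shape
`D·(-S) - D·(O)` and `D·(-T) - D·(O)`. Then `x * y` and `y * x` have the same divisor, so they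
differ by a constant `c`, which is fixed by every translation. Iterating gives
`x^N * y = c^N · y * x^N`; if `N • S = 0` then `x^N` has zero divisor and second component `0`,
so it is a constant as well, which forces `c^N = 1`. For `x = (fⁿ, S)` and `y = (gᵐ, T)` this
gives `c^m = c^n = 1`, hence `c = 1`, and the homomorphism property follows by associativity. -/

open Finset

section TwistedNorm

variable {M A : Type*} [CommGroup M] [AddCommMonoid A]

/-- With `U Q` the translation by `Q`, this is the first component of `(F, S)^j` in the theta
group. -/
def twistedNorm (U : A → M →* M) (S : A) (F : M) (j : ℕ) : M :=
  ∏ i ∈ range j, U (i • S) F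

theorem twistedNorm_zero (U : A → M →* M) (S : A) (F : M) : twistedNorm U S F 0 = 1 :=
  prod_range_zero _

theorem twistedNorm_succ (U : A → M →* M) (S : A) (F : M) (j : ℕ) :
    twistedNorm U S F (j + 1) = U (j • S) F * twistedNorm U S F j := by
  rw [twistedNorm, prod_range_succ, mul_comm, twistedNorm]

theorem twistedNorm_mul_eq {U : A → M →* M} (hU0 : ∀ x, U 0 x = x)
    (hUadd : ∀ P Q x, U P (U Q x) = U (P + Q) x) {S T : A} {F H c : M}
    (hc : ∀ Q, U Q c = c) (hR : U T F * H = c * (U S H * F)) (j : ℕ) :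
    U T (twistedNorm U S F j) * H = c ^ j * (U (j • S) H * twistedNorm U S F j) := by
  induction j with
  | zero => rw [twistedNorm_zero, map_one, pow_zero, zero_smul, hU0, one_mul, one_mul, mul_one]
  | succ j ih =>
    calc U T (twistedNorm U S F (j + 1)) * H
        = U (j • S) (U T F) * (U T (twistedNorm U S F j) * H) := by
          rw [twistedNorm_succ, map_mul, hUadd, hUadd, add_comm, mul_assoc]
      _ = c ^ j * (U (j • S) (U T F * H) * twistedNorm U S F j) := by
          rw [ih, map_mul]; ac_rfl
      _ = c ^ (j + 1) * (U ((j + 1) • S) H * twistedNorm U S F (j + 1)) := by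
          rw [hR, map_mul, map_mul, hc, hUadd, twistedNorm_succ, succ_nsmul, pow_succ]; ac_rfl

theorem pow_eq_one_of_twisted_comm {U : A → M →* M} (hU0 : ∀ x, U 0 x = x)
    (hUadd : ∀ P Q x, U P (U Q x) = U (P + Q) x) {S T : A} {F H c : M} {N : ℕ}
    (hc : ∀ Q, U Q c = c) (hR : U T F * H = c * (U S H * F)) (hS : N • S = 0)
    (hfix : U T (twistedNorm U S F N) = twistedNorm U S F N) : c ^ N = 1 := by
  have h := twistedNorm_mul_eq hU0 hUadd hc hR N
  rw [hfix, hS, hU0, mul_comm H] at h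
  exact right_eq_mul.1 h

end TwistedNorm

section ThetaGroup

variable {div : Fnˣ → E →₀ ℤ} {t : E → Fn ≃+* Fn}

section

omit [AddCommGroup E] [DecidableEq E]

theorem divisor_one (hdivmul : ∀ f g : Fnˣ, div (f * g) = div f + div g) : div 1 = 0 :=
  left_eq_add.1 (by rw [← hdivmul 1 1, mul_one])

theorem divisor_pow_apply (hdivmul : ∀ f g : Fnˣ, div (f * g) = div f + div g) (f : Fnˣ)
    (j : ℕ) (P : E) : div (f ^ j) P = j * div f P := by
  induction j with
  | zero => simp [divisor_one hdivmul]
  | succ j ih => rw [pow_succ, hdivmul, Finsupp.add_apply, ih]; push_cast; ring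

theorem divisor_div_eq_zero (hdivmul : ∀ f g : Fnˣ, div (f * g) = div f + div g) {X Y : Fnˣ}
    (h : div X = div Y) : div (X / Y) = 0 := by
  have h' := hdivmul (X / Y) Y
  rw [div_mul_cancel, h] at h'
  exact right_eq_add.1 h'

theorem units_map_translate_eq_self {R : Type*} [Semiring R] (ι : R →+* Fn)
    (hconst : ∀ f : Fnˣ, div f = 0 → ∃ c : Rˣ, (f : Fn) = ι c)
    (htconst : ∀ (P : E) (c : R), t P (ι c) = ι c) {f : Fnˣ} (hf : div f = 0) (Q : E) :
    Units.map (t Q : Fn →* Fn) f = f := by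
  obtain ⟨c, hc⟩ := hconst f hf
  ext
  simp [hc, htconst]

end

section

omit [DecidableEq E]

theorem units_map_translate_zero (ht0 : t 0 = RingEquiv.refl Fn) (f : Fnˣ) :
    Units.map (t 0 : Fn →* Fn) f = f := by
  ext; simp [ht0]

theorem units_map_translate_translate (htadd : ∀ (P Q : E) (f : Fn), t P (t Q f) = t (P + Q) f)
    (P Q : E) (f : Fnˣ) :
    Units.map (t P : Fn →* Fn) (Units.map (t Q : Fn →* Fn) f) =
      Units.map (t (P + Q) : Fn →* Fn) f :=
  Units.ext (htadd P Q f)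

theorem thetaMul_assoc (htadd : ∀ (P Q : E) (f : Fn), t P (t Q f) = t (P + Q) f)
    (x y z : Fnˣ × E) : thetaMul t (thetaMul t x y) z = thetaMul t x (thetaMul t y z) := by
  simp only [thetaMul, map_mul, units_map_translate_translate htadd, mul_assoc, add_assoc,
    add_comm z.2 y.2]

theorem thetaMul_pow (x y : Fnˣ × E) (j : ℕ) :
    thetaMul t (x.1 ^ j, x.2) (y.1 ^ j, y.2) = ((thetaMul t x y).1 ^ j, (thetaMul t x y).2) := by
  simp [thetaMul, mul_pow]

theorem thetaCombine_thetaMul (htadd : ∀ (P Q : E) (f : Fn), t P (t Q f) = t (P + Q) f)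
    {m n : ℕ} (p p' q q' : Fnˣ × E)
    (hcomm : thetaMul t (p'.1 ^ n, p'.2) (q.1 ^ m, q.2) =
      thetaMul t (q.1 ^ m, q.2) (p'.1 ^ n, p'.2)) :
    thetaCombine t m n (thetaMul t p p') (thetaMul t q q') =
      thetaMul t (thetaCombine t m n p q) (thetaCombine t m n p' q') := by
  simp only [thetaCombine, ← thetaMul_pow]
  rw [thetaMul_assoc htadd, ← thetaMul_assoc htadd (p'.1 ^ n, p'.2), hcomm,
    thetaMul_assoc htadd, ← thetaMul_assoc htadd]

end

/-- The divisor `D·(-S) - D·(O)`, as in `ThetaMem`. -/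
def thetaDiv (D : ℤ) (S P : E) : ℤ :=
  (if P = -S then D else 0) - (if P = 0 then D else 0)

theorem thetaDiv_zero (D : ℤ) (P : E) : thetaDiv D 0 P = 0 := by
  simp [thetaDiv]

theorem thetaDiv_add_translate (D : ℤ) (S T P : E) :
    thetaDiv D S (P + T) + thetaDiv D T P = thetaDiv D (S + T) P := by
  have h₁ : P + T = -S ↔ P = -(S + T) := by rw [neg_add', eq_sub_iff_add_eq]
  have h₂ : P + T = 0 ↔ P = -T := add_eq_zero_iff_eq_neg
  simp only [thetaDiv, h₁, h₂]
  ring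

theorem divisor_thetaMul_fst (hdivmul : ∀ f g : Fnˣ, div (f * g) = div f + div g)
    (htdiv : ∀ (Q : E) (f : Fnˣ) (P : E), div (Units.map (t Q : Fn →* Fn) f) P = div f (P + Q))
    {D : ℤ} {x y : Fnˣ × E} (hx : ∀ P, div x.1 P = thetaDiv D x.2 P)
    (hy : ∀ P, div y.1 P = thetaDiv D y.2 P) (P : E) :
    div (thetaMul t x y).1 P = thetaDiv D (x.2 + y.2) P := by
  rw [thetaMul, hdivmul, Finsupp.add_apply, htdiv, hx, hy, thetaDiv_add_translate]

theorem ThetaMem.thetaMul (hdivmul : ∀ f g : Fnˣ, div (f * g) = div f + div g)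
    (htdiv : ∀ (Q : E) (f : Fnˣ) (P : E), div (Units.map (t Q : Fn →* Fn) f) P = div f (P + Q))
    {N : ℕ} {x y : Fnˣ × E} (hx : ThetaMem div N x) (hy : ThetaMem div N y) :
    ThetaMem div N (thetaMul t x y) :=
  ⟨show N • (x.2 + y.2) = 0 by rw [smul_add, hx.1, hy.1, add_zero],
    divisor_thetaMul_fst hdivmul htdiv hx.2 hy.2⟩

theorem ThetaMem.pow (hdivmul : ∀ f g : Fnˣ, div (f * g) = div f + div g) {m : ℕ}
    {p : Fnˣ × E} (hp : ThetaMem div m p) (j : ℕ) : ThetaMem div (m * j) (p.1 ^ j, p.2) := by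
  refine ⟨by rw [mul_comm, mul_smul, hp.1, smul_zero], fun P => ?_⟩
  rw [divisor_pow_apply hdivmul, hp.2]
  split_ifs <;> push_cast <;> ring

theorem divisor_twistedNorm (hdivmul : ∀ f g : Fnˣ, div (f * g) = div f + div g)
    (htdiv : ∀ (Q : E) (f : Fnˣ) (P : E), div (Units.map (t Q : Fn →* Fn) f) P = div f (P + Q))
    {D : ℤ} {S : E} {F : Fnˣ} (hF : ∀ P, div F P = thetaDiv D S P) (j : ℕ) (P : E) :
    div (twistedNorm (fun Q => Units.map (t Q : Fn →* Fn)) S F j) P = thetaDiv D (j • S) P := by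
  induction j generalizing P with
  | zero => rw [twistedNorm_zero, divisor_one hdivmul, zero_smul, thetaDiv_zero]; rfl
  | succ j ih =>
    rw [twistedNorm_succ, succ_nsmul']
    exact divisor_thetaMul_fst (x := (F, S)) (y := (_, j • S)) hdivmul htdiv hF ih P

theorem thetaMul_div_thetaMul_pow_eq_one
    (hdivmul : ∀ f g : Fnˣ, div (f * g) = div f + div g)
    (htdiv : ∀ (Q : E) (f : Fnˣ) (P : E), div (Units.map (t Q : Fn →* Fn) f) P = div f (P + Q))
    (ht0 : t 0 = RingEquiv.refl Fn) (htadd : ∀ (P Q : E) (f : Fn), t P (t Q f) = t (P + Q) f)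
    (hfix : ∀ f : Fnˣ, div f = 0 → ∀ Q, Units.map (t Q : Fn →* Fn) f = f)
    {D : ℤ} {N : ℕ} {x y : Fnˣ × E} (hx : ∀ P, div x.1 P = thetaDiv D x.2 P)
    (hy : ∀ P, div y.1 P = thetaDiv D y.2 P) (hN : N • x.2 = 0) :
    ((thetaMul t x y).1 / (thetaMul t y x).1) ^ N = 1 := by
  have hc : div ((thetaMul t x y).1 / (thetaMul t y x).1) = 0 := by
    refine divisor_div_eq_zero hdivmul (Finsupp.ext fun P => ?_)
    rw [divisor_thetaMul_fst hdivmul htdiv hx hy, divisor_thetaMul_fst hdivmul htdiv hy hx,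
      add_comm]
  refine pow_eq_one_of_twisted_comm (units_map_translate_zero ht0)
    (units_map_translate_translate htadd) (hfix _ hc) (div_mul_cancel _ _).symm hN
    (hfix _ ?_ _)
  ext P
  rw [divisor_twistedNorm hdivmul htdiv hx, hN, thetaDiv_zero]
  rfl

theorem thetaMul_pow_comm_of_coprime (hdivmul : ∀ f g : Fnˣ, div (f * g) = div f + div g)
    (htdiv : ∀ (Q : E) (f : Fnˣ) (P : E), div (Units.map (t Q : Fn →* Fn) f) P = div f (P + Q))
    (ht0 : t 0 = RingEquiv.refl Fn) (htadd : ∀ (P Q : E) (f : Fn), t P (t Q f) = t (P + Q) f)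
    (hfix : ∀ f : Fnˣ, div f = 0 → ∀ Q, Units.map (t Q : Fn →* Fn) f = f)
    {m n : ℕ} (hmn : m.Coprime n) {p q : Fnˣ × E} (hp : ThetaMem div m p)
    (hq : ThetaMem div n q) :
    thetaMul t (p.1 ^ n, p.2) (q.1 ^ m, q.2) = thetaMul t (q.1 ^ m, q.2) (p.1 ^ n, p.2) := by
  have hx := (hp.pow hdivmul n).2
  have hy := (mul_comm n m ▸ hq.pow hdivmul m).2
  have hcm := thetaMul_div_thetaMul_pow_eq_one hdivmul htdiv ht0 htadd hfix hx hy hp.1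
  have hcn := thetaMul_div_thetaMul_pow_eq_one hdivmul htdiv ht0 htadd hfix hy hx hq.1
  rw [← inv_div, inv_pow, inv_eq_one] at hcn
  exact Prod.ext (div_eq_one.1 ((pow_eq_one_iff_of_coprime hmn).1 ⟨hcm, hcn⟩)) (add_comm _ _)

end ThetaGroup

theorem theta_combine_hom_general
    (ι : k →+* Fn)
    (div : Fnˣ → (E →₀ ℤ))
    (hdivmul : ∀ f g : Fnˣ, div (f * g) = div f + div g)
    (hconst : ∀ f : Fnˣ, div f = 0 → ∃ c : kˣ, (f : Fn) = ι c)
    (t : E → Fn ≃+* Fn)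
    (ht0 : t 0 = RingEquiv.refl Fn)
    (htadd : ∀ (P Q : E) (f : Fn), t P (t Q f) = t (P + Q) f)
    (htconst : ∀ (P : E) (c : k), t P (ι c) = ι c)
    (htdiv : ∀ (Q : E) (f : Fnˣ) (P : E),
      div (Units.map (t Q : Fn →* Fn) f) P = div f (P + Q))
    (m n : ℕ) (hmn : Nat.Coprime m n) :
    (∀ p q : Fnˣ × E, ThetaMem div m p → ThetaMem div n q →
      thetaMul t (p.1 ^ n, p.2) (q.1 ^ m, q.2) =
        thetaMul t (q.1 ^ m, q.2) (p.1 ^ n, p.2)) ∧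
    (∀ p q : Fnˣ × E, ThetaMem div m p → ThetaMem div n q →
      ThetaMem div (m * n) (thetaCombine t m n p q)) ∧
    (∀ p p' q q' : Fnˣ × E, ThetaMem div m p → ThetaMem div m p' →
      ThetaMem div n q → ThetaMem div n q' →
      thetaCombine t m n (thetaMul t p p') (thetaMul t q q') =
        thetaMul t (thetaCombine t m n p q) (thetaCombine t m n p' q')) := by
  have hfix : ∀ f : Fnˣ, div f = 0 → ∀ Q, Units.map (t Q : Fn →* Fn) f = f :=
    fun _ hf => units_map_translate_eq_self ι hconst htconst hf
  have hcomm := fun p q (hp : ThetaMem div m p) (hq : ThetaMem div n q) =>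
    thetaMul_pow_comm_of_coprime hdivmul htdiv ht0 htadd hfix hmn hp hq
  refine ⟨hcomm, fun p q hp hq => ?_, fun p p' q q' _ hp' hq _ =>
    thetaCombine_thetaMul htadd p p' q q' (hcomm p' q hp' hq)⟩
  exact (hp.pow hdivmul n).thetaMul hdivmul htdiv (mul_comm n m ▸ hq.pow hdivmul m)

/-- **(Fisher, Proposition 3.8.)** For coprime `m`, `n`, the commutator of `(fⁿ, S)` and
`(gᵐ, T)` in `Θₘₙ` is trivial for all `(f, S) ∈ Θₘ` and `(g, T) ∈ Θₙ`; consequently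
`((f, S), (g, T)) ↦ (fⁿ, S) * (gᵐ, T)` defines a group homomorphism `Θₘ × Θₙ → Θₘₙ`. -/
theorem theta_combine_hom
    (ι : k →+* Fn)
    (div : Fnˣ → (E →₀ ℤ))
    (hdivmul : ∀ f g : Fnˣ, div (f * g) = div f + div g)
    (hconst : ∀ f : Fnˣ, div f = 0 → ∃ c : kˣ, (f : Fn) = ι c)
    (t : E → Fn ≃+* Fn)
    (ht0 : t 0 = RingEquiv.refl Fn)
    (htadd : ∀ (P Q : E) (f : Fn), t P (t Q f) = t (P + Q) f)
    (htconst : ∀ (P : E) (c : k), t P (ι c) = ι c)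
    (htdiv : ∀ (Q : E) (f : Fnˣ) (P : E),
      div (Units.map (t Q : Fn →* Fn) f) P = div f (P + Q))
    (ng : Fn ≃+* Fn)
    (hngdiv : ∀ (f : Fnˣ) (P : E), div (Units.map (ng : Fn →* Fn) f) P = div f (-P))
    (hngt : ∀ (Q : E) (f : Fn), ng (t Q f) = t (-Q) (ng f))
    (hngconst : ∀ c : k, ng (ι c) = ι c)
    (ev : E → Fn → k)
    (hevconst : ∀ (P : E) (c : k), ev P (ι c) = c)
    (hevmul : ∀ (P : E) (f g : Fnˣ), 0 ≤ div f P → 0 ≤ div g P →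
      ev P ((f : Fn) * g) = ev P f * ev P g)
    (hevt : ∀ (P Q : E) (f : Fnˣ), 0 ≤ div f (P + Q) → ev P (t Q f) = ev (P + Q) f)
    (hevng : ∀ (P : E) (f : Fnˣ), 0 ≤ div f (-P) → ev P (ng f) = ev (-P) f)
    (hevne : ∀ (P : E) (f : Fnˣ), div f P = 0 → ev P (f : Fn) ≠ 0)
    (m n : ℕ) (hm : 0 < m) (hn : 0 < n) (hmn : Nat.Coprime m n) :
    (∀ p q : Fnˣ × E, ThetaMem div m p → ThetaMem div n q →
      thetaMul t (p.1 ^ n, p.2) (q.1 ^ m, q.2) =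
        thetaMul t (q.1 ^ m, q.2) (p.1 ^ n, p.2)) ∧
    (∀ p q : Fnˣ × E, ThetaMem div m p → ThetaMem div n q →
      ThetaMem div (m * n) (thetaCombine t m n p q)) ∧
    (∀ p p' q q' : Fnˣ × E, ThetaMem div m p → ThetaMem div m p' →
      ThetaMem div n q → ThetaMem div n q' →
      thetaCombine t m n (thetaMul t p p') (thetaMul t q q') =
        thetaMul t (thetaCombine t m n p q) (thetaCombine t m n p' q')) :=
  theta_combine_hom_general ι div hdivmul hconst t ht0 htadd htconst htdiv m n hmn
end

section
/- Define ψ_a : H → H by ψ_a(h) = λ(h)^{a(a-1)/2}·h^a, where λ : H → Z is the map h ↦ ι h ι^{-1} h for a fixed element ι normalizing H with ι² central, and λ satisfies λ(xy) = λ(x)λ(y)[x,y] (with [x,y] = xyx^{-1}y^{-1} central). Suppose H is a group whose commutator subgroup is contained in its center Z, Z has exponent n, a is an integer coprime to n, and λ takes values in Z. Then ψ_a is a group homomorphism. -/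
open scoped commutatorElement

/-!
Once `⁅y, x⁆` is central, conjugating by `x` multiplies `y` by it, so
`y ^ a * x = x * y ^ a * ⁅y, x⁆ ^ a`, and induction on `a` gives
`(x * y) ^ a = x ^ a * y ^ a * ⁅y, x⁆ ^ (a * (a - 1) / 2)`. The defect `⁅x, y⁆ = ⁅y, x⁆⁻¹` of `lam`,
raised to the same exponent, cancels exactly this correction term.
-/

section CentralCommutator

variable {G : Type*} [Group G] {x y : G}

theorem inv_mul_mul_eq_commutatorElement_mul (hc : ⁅y, x⁆ ∈ Subgroup.center G) :
    x⁻¹ * y * x = ⁅y, x⁆ * y := by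
  calc x⁻¹ * y * x = x⁻¹ * (⁅y, x⁆ * x) * y := by rw [commutatorElement_def]; group
    _ = ⁅y, x⁆ * y := by rw [(hc.comm x).eq]; group

theorem zpow_mul_eq_mul_zpow_mul_commutatorElement_zpow (hc : ⁅y, x⁆ ∈ Subgroup.center G)
    (a : ℤ) : y ^ a * x = x * y ^ a * ⁅y, x⁆ ^ a := by
  have hconj : x⁻¹ * y ^ a * x = ⁅y, x⁆ ^ a * y ^ a := by
    have h := conj_zpow (a := x⁻¹) (b := y) (i := a)
    rw [inv_inv] at h
    rw [← h, inv_mul_mul_eq_commutatorElement_mul hc, (hc.comm y).mul_zpow]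
  rw [mul_assoc x, ← ((hc.comm y).zpow_zpow a a).eq, ← hconj]
  group

theorem mul_zpow_eq_zpow_mul_zpow_mul_commutatorElement_zpow
    (hc : ⁅y, x⁆ ∈ Subgroup.center G) (a : ℤ) :
    (x * y) ^ a = x ^ a * y ^ a * ⁅y, x⁆ ^ (a * (a - 1) / 2) := by
  have hsucc : ∀ b : ℤ, x ^ (b + 1) * y ^ (b + 1) * ⁅y, x⁆ ^ ((b + 1) * (b + 1 - 1) / 2) =
      x ^ b * y ^ b * ⁅y, x⁆ ^ (b * (b - 1) / 2) * (x * y) := by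
    intro b
    have htri : (b + 1) * (b + 1 - 1) / 2 = b + b * (b - 1) / 2 := by
      rw [show (b + 1) * (b + 1 - 1) = b * (b - 1) + b * 2 by ring,
        Int.add_mul_ediv_right _ _ two_ne_zero, add_comm]
    calc x ^ (b + 1) * y ^ (b + 1) * ⁅y, x⁆ ^ ((b + 1) * (b + 1 - 1) / 2)
        = x ^ b * x * (y ^ b * y) * (⁅y, x⁆ ^ b * ⁅y, x⁆ ^ (b * (b - 1) / 2)) := by
          rw [htri, zpow_add_one, zpow_add_one, zpow_add]
      _ = x ^ b * (x * y ^ b * ⁅y, x⁆ ^ b) * y * ⁅y, x⁆ ^ (b * (b - 1) / 2) := by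
          simp only [mul_assoc, ((hc.comm y).zpow_left b).left_comm]
      _ = x ^ b * y ^ b * ⁅y, x⁆ ^ (b * (b - 1) / 2) * (x * y) := by
          rw [← zpow_mul_eq_mul_zpow_mul_commutatorElement_zpow hc]
          simp only [mul_assoc, ((hc.comm (x * y)).zpow_left _).eq]
  induction a using Int.induction_on with
  | zero => simp
  | succ i ih => rw [zpow_add_one, ih, hsucc]
  | pred i ih =>
    have h := hsucc (-i - 1)
    rw [sub_add_cancel] at h
    rw [zpow_sub_one, ih, h, mul_inv_cancel_right]

end CentralCommutator

theorem psi_a_is_group_hom_general {H : Type*} [Group H]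
    (hcomm : ∀ x y : H, ⁅x, y⁆ ∈ Subgroup.center H)
    (lam : H → H)
    (hlamZ : ∀ h : H, lam h ∈ Subgroup.center H)
    (hlam : ∀ x y : H, lam (x * y) = lam x * lam y * ⁅x, y⁆)
    (a : ℤ) :
    ∀ x y : H,
      lam (x * y) ^ (a * (a - 1) / 2) * (x * y) ^ a =
        (lam x ^ (a * (a - 1) / 2) * x ^ a) * (lam y ^ (a * (a - 1) / 2) * y ^ a) := by
  intro x y
  have hc := hcomm y x
  rw [mul_zpow_eq_zpow_mul_zpow_mul_commutatorElement_zpow hc]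
  set m := a * (a - 1) / 2
  have hlam_pow : lam (x * y) ^ m = lam x ^ m * lam y ^ m * (⁅y, x⁆ ^ m)⁻¹ := by
    rw [hlam, ← commutatorElement_inv, ((Subgroup.inv_mem _ hc).comm _).symm.mul_zpow,
      ((hlamZ x).comm _).mul_zpow, inv_zpow]
  rw [hlam_pow, ← ((hc.comm (x ^ a * y ^ a)).zpow_left m).eq]
  simp only [mul_assoc, inv_mul_cancel_left]
  rw [(((hlamZ y).comm _).zpow_left m).left_comm]

/-- Let `H` be a group whose commutator subgroup is contained in its centre `Z`, with `Z` of
exponent `n`, and let `lam : H → Z` satisfy `lam (x*y) = lam x * lam y * ⁅x,y⁆`.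
For `a` an integer coprime to `n`, the map `ψₐ : h ↦ lam h ^ (a(a-1)/2) * h ^ a` is a group
homomorphism. -/
theorem psi_a_is_group_hom {H : Type*} [Group H] (n : ℕ)
    (hcomm : ∀ x y : H, ⁅x, y⁆ ∈ Subgroup.center H)
    (hexp : ∀ z ∈ Subgroup.center H, z ^ n = 1)
    (lam : H → H)
    (hlamZ : ∀ h : H, lam h ∈ Subgroup.center H)
    (hlam : ∀ x y : H, lam (x * y) = lam x * lam y * ⁅x, y⁆)
    (a : ℤ) (ha : IsCoprime a (n : ℤ)) :
    ∀ x y : H,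
      lam (x * y) ^ (a * (a - 1) / 2) * (x * y) ^ a =
        (lam x ^ (a * (a - 1) / 2) * x ^ a) * (lam y ^ (a * (a - 1) / 2) * y ^ a) :=
  psi_a_is_group_hom_general hcomm lam hlamZ hlam a
end
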